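/- Under the assumptions and constructions of the second equivalent form, for every X ∈ Π^s(r_1,…,r_m) define X̃ ∈ ℝ_+^{(n+1)^m} by: X̃_v = X_v for v ∈ [n]^m; for each k ∈ [m] and each i_k ∈ [n], at the index u ∈ T_{[m]∖{k}} whose k-th coordinate is i_k, set X̃_u = (r_k)_{i_k} − Σ_{v ∈ [n]^m, v_k = i_k} X_v; and X̃_u = 0 at all other indices. Then X̃ ∈ Π(r̄_1^{(2)},…,r̄_m^{(2)}) and ⟨C̄^{(2)}, X̃⟩ = ⟨C, X⟩. Consequently, min_{X̄ ∈ Π(r̄_1^{(2)},…,r̄_m^{(2)})} ⟨C̄^{(2)}, X̄⟩ ≤ min_{X ∈ Π^s(r_1,…,r_m)} ⟨C, X⟩. -/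

import Mathlib

open Finset

noncomputable section

namespace MPOT

/-- The `k`-th marginal of a tensor indexed by `[n]^m` (functions `Fin m → Fin n`). -/
def marg {m n : ℕ} (X : (Fin m → Fin n) → ℝ) (k : Fin m) (j : Fin n) : ℝ :=
  ∑ v : Fin m → Fin n, if v k = j then X v else 0

/-- Entrywise (Frobenius) inner product of tensors. -/
def dot {m n : ℕ} (C X : (Fin m → Fin n) → ℝ) : ℝ :=
  ∑ v : Fin m → Fin n, C v * X v

/-- The partial transport polytope `Π^s(r_1, …, r_m)`. -/
def PiPartial {m n : ℕ} (r : Fin m → Fin n → ℝ) (s : ℝ) :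
    Set ((Fin m → Fin n) → ℝ) :=
  {X | (∀ v, 0 ≤ X v) ∧ (∀ k j, marg X k j ≤ r k j) ∧ ∑ v : Fin m → Fin n, X v = s}

/-- The transport polytope `Π(a_1, …, a_m)` with equality marginal constraints. -/
def PiEq {m n : ℕ} (a : Fin m → Fin n → ℝ) : Set ((Fin m → Fin n) → ℝ) :=
  {X | (∀ v, 0 ≤ X v) ∧ ∀ k j, marg X k j = a k j}

/-- Embedding of `[n]^m` into `[n+1]^m`. -/
def emb {m n : ℕ} (v : Fin m → Fin n) : Fin m → Fin (n + 1) :=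
  fun i => (v i).castSucc

/-- Restriction of a tensor on `[n+1]^m` to the indices in `[n]^m`. -/
def restr {m n : ℕ} (X : (Fin m → Fin (n + 1)) → ℝ) : (Fin m → Fin n) → ℝ :=
  fun v => X (emb v)

/-- The number of coordinates of `u` equal to `n+1` (i.e. `Fin.last n`); `u ∈ T_S`
with `|S| = nLast u`. -/
def nLast {m n : ℕ} (u : Fin m → Fin (n + 1)) : ℕ :=
  (univ.filter fun ℓ => u ℓ = Fin.last n).card

/-- Extended cost tensor: the original cost on `T_∅ = [n]^m`, and value `A i` on the
`i`-th layer `∪_{|S| = i} T_S`. -/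
def extCost {m n : ℕ} (C : (Fin m → Fin n) → ℝ) (A : ℕ → ℝ) :
    (Fin m → Fin (n + 1)) → ℝ :=
  fun u =>
    if h : ∀ i, u i ≠ Fin.last n then C fun i => (u i).castPred (h i)
    else A (nLast u)

/-- Total mass of `X` on the sublayer `T_S`. -/
def layerSum {m n : ℕ} (X : (Fin m → Fin (n + 1)) → ℝ) (S : Finset (Fin m)) : ℝ :=
  ∑ u : Fin m → Fin (n + 1), if ∀ ℓ, (u ℓ = Fin.last n ↔ ℓ ∈ S) then X u else 0

/-- First-form extended marginals `r̄_k^{(1)} = [r_k, Σ_r/(m−1) − ‖r_k‖₁ − s/(m−1)]`. -/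
def extMarg1 {m n : ℕ} (r : Fin m → Fin n → ℝ) (s : ℝ) : Fin m → Fin (n + 1) → ℝ :=
  fun k => Fin.snoc (r k)
    ((∑ i, ∑ j, r i j) / ((m : ℝ) - 1) - (∑ j, r k j) - s / ((m : ℝ) - 1))

/-- Second-form extended marginals `r̄_k^{(2)} = [r_k, Σ_{i≠k} ‖r_i‖₁ − (m−1)s]`. -/
def extMarg2 {m n : ℕ} (r : Fin m → Fin n → ℝ) (s : ℝ) : Fin m → Fin (n + 1) → ℝ :=
  fun k => Fin.snoc (r k) ((∑ i ∈ univ.erase k, ∑ j, r i j) - ((m : ℝ) - 1) * s)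

end MPOT

open MPOT

/-!
`X̃` lives on two layers of `[n+1]^m`: on `[n]^m`, where it is `X`, and on the `m·n` "spokes"
`T_{[m]∖{k}}`, where it carries the slack `r_k − c_k(X) ≥ 0`. Its `k`-th marginal at `i ≤ n`
is `c_k(X)_i + (r_k − c_k(X))_i = (r_k)_i`, and at `n+1` it collects the slacks of the other
coordinates, `Σ_{k'≠k} (‖r_{k'}‖₁ − s)`. Since `D_{m−1} = 0` the spokes cost nothing, so the cost
is unchanged. Hence every value of the partial problem is a value of the extended one; as
`Π^s` is nonempty (it contains `s` times the product of the normalised `r_k`) and its values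
are nonnegative, the infima compare even when the extended values are unbounded below, where
`sInf` is `0`.
-/

namespace MPOT

variable {m n : ℕ}

/-- The index of `T_{[m]∖{k}}` whose `k`-th coordinate is `i`. -/
def spoke (k : Fin m) (i : Fin n) : Fin m → Fin (n + 1) :=
  fun ℓ => if ℓ = k then i.castSucc else Fin.last n

@[simp]
lemma emb_apply (v : Fin m → Fin n) (ℓ : Fin m) : emb v ℓ = (v ℓ).castSucc := rfl

lemma emb_injective : Function.Injective (emb : (Fin m → Fin n) → Fin m → Fin (n + 1)) :=
  fun _ _ h => funext fun ℓ => Fin.castSucc_injective n (congrFun h ℓ)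

@[simp]
lemma spoke_apply_self (k : Fin m) (i : Fin n) : spoke k i k = i.castSucc := if_pos rfl

lemma spoke_apply_of_ne {k ℓ : Fin m} (h : ℓ ≠ k) (i : Fin n) : spoke k i ℓ = Fin.last n :=
  if_neg h

lemma spoke_apply_eq_last_iff {k ℓ : Fin m} {i : Fin n} : spoke k i ℓ = Fin.last n ↔ ℓ ≠ k := by
  by_cases h : ℓ = k <;> simp [spoke, h, Fin.castSucc_ne_last]

lemma spoke_apply_eq_castSucc_iff {k ℓ : Fin m} {i j : Fin n} :
    spoke k i ℓ = j.castSucc ↔ ℓ = k ∧ i = j := by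
  by_cases h : ℓ = k <;> simp [spoke, h, (Fin.castSucc_ne_last j).symm]

lemma spoke_injective : Function.Injective (Function.uncurry (spoke (m := m) (n := n))) := by
  rintro ⟨k, i⟩ ⟨k', i'⟩ h
  have hk := congrFun h k
  simp only [Function.uncurry_apply_pair, spoke_apply_self, eq_comm (a := i.castSucc),
    spoke_apply_eq_castSucc_iff] at hk
  simp [hk.1, hk.2]

lemma nLast_emb (v : Fin m → Fin n) : nLast (emb v) = 0 := by
  simp [nLast, Fin.castSucc_ne_last]

lemma nLast_spoke (k : Fin m) (i : Fin n) : nLast (spoke k i) = m - 1 := by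
  simp [nLast, spoke_apply_eq_last_iff, filter_ne', card_erase_of_mem]

lemma exists_emb_eq_of_nLast_eq_zero {u : Fin m → Fin (n + 1)} (h : nLast u = 0) :
    ∃ v, emb v = u := by
  have hu : ∀ ℓ, u ℓ ≠ Fin.last n := by simpa [nLast, filter_eq_empty_iff] using h
  exact ⟨fun ℓ => (u ℓ).castPred (hu ℓ), funext fun ℓ => by simp⟩

lemma exists_spoke_eq_of_nLast_eq (hm : 1 ≤ m) {u : Fin m → Fin (n + 1)}
    (h : nLast u = m - 1) : ∃ k i, spoke k i = u := by
  have hcard : #{ℓ | ¬u ℓ = Fin.last n} = 1 := by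
    have := card_filter_add_card_filter_not (s := univ) (fun ℓ => u ℓ = Fin.last n)
    rw [card_univ, Fintype.card_fin] at this
    have h' : #{ℓ | u ℓ = Fin.last n} = m - 1 := h
    omega
  obtain ⟨k, hk⟩ := card_eq_one.mp hcard
  have hmem : ∀ ℓ, u ℓ ≠ Fin.last n ↔ ℓ = k := fun ℓ => by
    simpa using congrArg (ℓ ∈ ·) hk
  refine ⟨k, (u k).castPred ((hmem k).2 rfl), funext fun ℓ => ?_⟩
  by_cases hℓ : ℓ = k
  · subst hℓ; simp
  · rw [spoke_apply_of_ne hℓ]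
    exact (not_not.mp (mt (hmem ℓ).1 hℓ)).symm

lemma injective_sumElim_emb_spoke (hm : 2 ≤ m) :
    Function.Injective (Sum.elim emb (Function.uncurry (spoke (m := m) (n := n)))) := by
  refine emb_injective.sumElim spoke_injective fun v p h => ?_
  have h' := congrArg nLast h
  rw [nLast_emb, Function.uncurry_def, nLast_spoke] at h'
  omega

lemma not_exists_sumElim_emb_spoke_eq {u : Fin m → Fin (n + 1)} (h₀ : 0 < nLast u)
    (h₁ : nLast u ≠ m - 1) : ¬∃ x, Sum.elim emb (Function.uncurry spoke) x = u := by
  rintro ⟨v | ⟨k, i⟩, rfl⟩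
  · exact h₀.ne' (nLast_emb v)
  · exact h₁ (nLast_spoke k i)

lemma sum_eq_sum_emb_add_sum_spoke {M : Type*} [AddCommMonoid M] (hm : 2 ≤ m)
    {g : (Fin m → Fin (n + 1)) → M} (hg : ∀ u, 0 < nLast u → nLast u ≠ m - 1 → g u = 0) :
    ∑ u, g u = ∑ v, g (emb v) + ∑ k, ∑ i, g (spoke k i) := by
  rw [← Fintype.sum_of_injective _ (injective_sumElim_emb_spoke hm) _ g ?_ fun _ => rfl]
  · simp [Fintype.sum_prod_type]
  intro u hu
  refine hg u (Nat.pos_of_ne_zero fun h => hu ?_) fun h => hu ?_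
  · obtain ⟨v, rfl⟩ := exists_emb_eq_of_nLast_eq_zero h
    exact ⟨.inl v, rfl⟩
  · obtain ⟨k, i, rfl⟩ := exists_spoke_eq_of_nLast_eq (by omega) h
    exact ⟨.inr (k, i), rfl⟩

lemma marg_castSucc_of_supported (hm : 2 ≤ m) {Y : (Fin m → Fin (n + 1)) → ℝ}
    (hY : ∀ u, 0 < nLast u → nLast u ≠ m - 1 → Y u = 0) (k : Fin m) (j : Fin n) :
    marg Y k j.castSucc = marg (restr Y) k j + Y (spoke k j) := by
  rw [marg, sum_eq_sum_emb_add_sum_spoke hm (fun u h₀ h₁ => by simp [hY u h₀ h₁])]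
  simp [marg, restr, spoke_apply_eq_castSucc_iff, ite_and]

lemma marg_last_of_supported (hm : 2 ≤ m) {Y : (Fin m → Fin (n + 1)) → ℝ}
    (hY : ∀ u, 0 < nLast u → nLast u ≠ m - 1 → Y u = 0) (k : Fin m) :
    marg Y k (Fin.last n) = ∑ k' ∈ univ.erase k, ∑ i, Y (spoke k' i) := by
  rw [marg, sum_eq_sum_emb_add_sum_spoke hm (fun u h₀ h₁ => by simp [hY u h₀ h₁])]
  simp only [emb_apply, Fin.castSucc_ne_last, if_false, sum_const_zero, zero_add,
    spoke_apply_eq_last_iff, sum_ite_irrel]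
  rw [← sum_filter, filter_ne]

lemma extCost_emb (C : (Fin m → Fin n) → ℝ) (D : ℕ → ℝ) (v : Fin m → Fin n) :
    extCost C D (emb v) = C v := by
  simp [extCost, Fin.castSucc_ne_last]

lemma extCost_of_nLast_pos (C : (Fin m → Fin n) → ℝ) (D : ℕ → ℝ) {u : Fin m → Fin (n + 1)}
    (h : 0 < nLast u) : extCost C D u = D (nLast u) := by
  obtain ⟨ℓ, hℓ⟩ := card_pos.mp h
  rw [extCost, dif_neg fun hu => hu ℓ (mem_filter.mp hℓ).2]

lemma dot_extCost_of_supported (hm : 2 ≤ m) {Y : (Fin m → Fin (n + 1)) → ℝ}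
    (hY : ∀ u, 0 < nLast u → nLast u ≠ m - 1 → Y u = 0) (C : (Fin m → Fin n) → ℝ) (D : ℕ → ℝ) :
    dot (extCost C D) Y = dot C (restr Y) + D (m - 1) * ∑ k, ∑ i, Y (spoke k i) := by
  rw [dot, sum_eq_sum_emb_add_sum_spoke hm (fun u h₀ h₁ => by simp [hY u h₀ h₁])]
  simp [dot, restr, extCost_emb, extCost_of_nLast_pos, nLast_spoke, mul_sum,
    show 0 < m - 1 by omega]

lemma sum_marg (X : (Fin m → Fin n) → ℝ) (k : Fin m) : ∑ j, marg X k j = ∑ v, X v := by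
  simp only [marg]
  rw [sum_comm]
  simp

lemma marg_smul (c : ℝ) (X : (Fin m → Fin n) → ℝ) (k : Fin m) (j : Fin n) :
    marg (c • X) k j = c * marg X k j := by
  simp [marg, mul_sum]

lemma marg_prod (f : Fin m → Fin n → ℝ) (k : Fin m) (j : Fin n) :
    marg (fun v => ∏ ℓ, f ℓ (v ℓ)) k j = f k j * ∏ ℓ ∈ univ.erase k, ∑ i, f ℓ i := by
  rw [marg, ← sum_filter, ← Fintype.piFinset_univ,
    ← Fintype.piFinset_update_singleton_eq_filter_piFinset_eq
      (fun _ : Fin m => (univ : Finset (Fin n))) k (mem_univ j),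
    ← Finset.prod_univ_sum, ← mul_prod_erase _ _ (mem_univ k)]
  simp only [Function.update_self, sum_singleton]
  congr 1
  exact prod_congr rfl fun ℓ hℓ => by rw [Function.update_of_ne (ne_of_mem_erase hℓ)]

lemma PiPartial_nonempty {r : Fin m → Fin n → ℝ} {s : ℝ} (hr : ∀ k j, 0 ≤ r k j) (hs0 : 0 ≤ s)
    (hs : ∀ k, s ≤ ∑ j, r k j) : (PiPartial r s).Nonempty := by
  rcases hs0.eq_or_lt with rfl | hs_pos
  · exact ⟨0, fun _ => le_rfl, fun k j => by simpa [marg] using hr k j, by simp⟩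
  have hR : ∀ k, 0 < ∑ j, r k j := fun k => hs_pos.trans_le (hs k)
  set p : Fin m → Fin n → ℝ := fun k j => r k j / ∑ j', r k j'
  have hp_sum : ∀ k, ∑ j, p k j = 1 := fun k => by rw [← sum_div, div_self (hR k).ne']
  have hp_marg : ∀ k j, marg (fun v => ∏ ℓ, p ℓ (v ℓ)) k j = p k j := fun k j => by
    simp [marg_prod, hp_sum]
  refine ⟨s • fun v => ∏ ℓ, p ℓ (v ℓ), fun v => ?_, fun k j => ?_, ?_⟩
  · exact smul_nonneg hs0 (prod_nonneg fun ℓ _ => div_nonneg (hr _ _) (hR ℓ).le)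
  · rw [marg_smul, hp_marg]
    calc s * p k j ≤ (∑ j', r k j') * p k j :=
          mul_le_mul_of_nonneg_right (hs k) (div_nonneg (hr k j) (hR k).le)
      _ = r k j := mul_div_cancel₀ _ (hR k).ne'
  · simp [← mul_sum, ← Fintype.prod_sum, hp_sum]

lemma mem_PiEq_extMarg2 (hm : 2 ≤ m) {r : Fin m → Fin n → ℝ} {s : ℝ}
    {X : (Fin m → Fin n) → ℝ} {Xt : (Fin m → Fin (n + 1)) → ℝ} (hX : X ∈ PiPartial r s)
    (h_emb : ∀ v, Xt (emb v) = X v) (h_spoke : ∀ k i, Xt (spoke k i) = r k i - marg X k i)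
    (h_zero : ∀ u, 0 < nLast u → nLast u ≠ m - 1 → Xt u = 0) :
    Xt ∈ PiEq (extMarg2 r s) := by
  obtain ⟨hX_nonneg, hX_marg, hX_mass⟩ := hX
  refine ⟨fun u => ?_, fun k j => ?_⟩
  · by_cases h₀ : nLast u = 0
    · obtain ⟨v, rfl⟩ := exists_emb_eq_of_nLast_eq_zero h₀
      exact (h_emb v).symm ▸ hX_nonneg v
    by_cases h₁ : nLast u = m - 1
    · obtain ⟨k, i, rfl⟩ := exists_spoke_eq_of_nLast_eq (by omega) h₁
      exact (h_spoke k i).symm ▸ sub_nonneg.mpr (hX_marg k i)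
    · exact (h_zero u (by omega) h₁).ge
  induction j using Fin.lastCases with
  | last =>
    rw [marg_last_of_supported hm h_zero, extMarg2, Fin.snoc_last]
    simp [h_spoke, sum_sub_distrib, sum_marg, hX_mass, card_erase_of_mem,
      Nat.cast_sub (by omega : 1 ≤ m)]
  | cast j =>
    rw [marg_castSucc_of_supported hm h_zero, show restr Xt = X from funext h_emb, h_spoke,
      extMarg2, Fin.snoc_castSucc, add_sub_cancel]

lemma dot_extCost_eq (hm : 2 ≤ m) {C : (Fin m → Fin n) → ℝ} {D : ℕ → ℝ} (hD : D (m - 1) = 0)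
    {X : (Fin m → Fin n) → ℝ} {Xt : (Fin m → Fin (n + 1)) → ℝ} (h_emb : ∀ v, Xt (emb v) = X v)
    (h_zero : ∀ u, 0 < nLast u → nLast u ≠ m - 1 → Xt u = 0) :
    dot (extCost C D) Xt = dot C X := by
  rw [dot_extCost_of_supported hm h_zero, hD, zero_mul, add_zero,
    show restr Xt = X from funext h_emb]

def extendBySpokes (X : (Fin m → Fin n) → ℝ) (w : Fin m → Fin n → ℝ) :
    (Fin m → Fin (n + 1)) → ℝ :=
  Function.extend (Sum.elim emb (Function.uncurry spoke)) (Sum.elim X (Function.uncurry w)) 0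

lemma extendBySpokes_emb (hm : 2 ≤ m) (X : (Fin m → Fin n) → ℝ) (w : Fin m → Fin n → ℝ)
    (v : Fin m → Fin n) : extendBySpokes X w (emb v) = X v :=
  (injective_sumElim_emb_spoke hm).extend_apply _ _ (.inl v)

lemma extendBySpokes_spoke (hm : 2 ≤ m) (X : (Fin m → Fin n) → ℝ) (w : Fin m → Fin n → ℝ)
    (k : Fin m) (i : Fin n) : extendBySpokes X w (spoke k i) = w k i :=
  (injective_sumElim_emb_spoke hm).extend_apply _ _ (.inr (k, i))

lemma extendBySpokes_eq_zero (X : (Fin m → Fin n) → ℝ) (w : Fin m → Fin n → ℝ)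
    {u : Fin m → Fin (n + 1)} (h₀ : 0 < nLast u) (h₁ : nLast u ≠ m - 1) :
    extendBySpokes X w u = 0 :=
  Function.extend_apply' _ _ _ (not_exists_sumElim_emb_spoke_eq h₀ h₁)

end MPOT

theorem Real.sInf_le_sInf_of_subset_of_nonneg {A B : Set ℝ} (hAB : A ⊆ B) (hA : A.Nonempty)
    (hA_nonneg : ∀ a ∈ A, 0 ≤ a) : sInf B ≤ sInf A := by
  by_cases hB : BddBelow B
  · exact csInf_le_csInf hB hA hAB
  · rw [Real.sInf_of_not_bddBelow hB]
    exact Real.sInf_nonneg hA_nonneg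

theorem mpot_second_form_extension_general {m n : ℕ} (hm : 3 ≤ m)
    (C : (Fin m → Fin n) → ℝ) (hC : ∀ v, 0 ≤ C v)
    (r : Fin m → Fin n → ℝ) (hr : ∀ k j, 0 ≤ r k j)
    (s : ℝ) (hs0 : 0 ≤ s) (hs : ∀ k, s ≤ ∑ j, r k j)
    (D : ℕ → ℝ) (hDm1 : D (m - 1) = 0) :
    (∀ X ∈ PiPartial r s, ∀ Xt : (Fin m → Fin (n + 1)) → ℝ,
      (∀ v : Fin m → Fin n, Xt (emb v) = X v) →
      (∀ (k : Fin m) (i : Fin n),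
        Xt (fun ℓ => if ℓ = k then i.castSucc else Fin.last n) = r k i - marg X k i) →
      (∀ u : Fin m → Fin (n + 1), 0 < nLast u → nLast u ≠ m - 1 → Xt u = 0) →
      Xt ∈ PiEq (extMarg2 r s) ∧ dot (extCost C D) Xt = dot C X) ∧
    sInf ((fun Y => dot (extCost C D) Y) '' PiEq (extMarg2 r s))
      ≤ sInf ((fun X => dot C X) '' PiPartial r s) := by
  have hm2 : 2 ≤ m := by omega
  have extension : ∀ X ∈ PiPartial r s, ∀ Xt : (Fin m → Fin (n + 1)) → ℝ,
      (∀ v, Xt (emb v) = X v) → (∀ k i, Xt (spoke k i) = r k i - marg X k i) →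
      (∀ u, 0 < nLast u → nLast u ≠ m - 1 → Xt u = 0) →
      Xt ∈ PiEq (extMarg2 r s) ∧ dot (extCost C D) Xt = dot C X :=
    fun X hX Xt h_emb h_spoke h_zero =>
      ⟨mem_PiEq_extMarg2 hm2 hX h_emb h_spoke h_zero, dot_extCost_eq hm2 hDm1 h_emb h_zero⟩
  refine ⟨extension, Real.sInf_le_sInf_of_subset_of_nonneg ?_ ?_ ?_⟩
  · rintro _ ⟨X, hX, rfl⟩
    let w := fun k i => r k i - marg X k i
    exact ⟨extendBySpokes X w, extension X hX _ (extendBySpokes_emb hm2 X w)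
      (extendBySpokes_spoke hm2 X w) fun u => extendBySpokes_eq_zero X w⟩
  · exact (PiPartial_nonempty hr hs0 hs).image _
  · rintro _ ⟨X, hX, rfl⟩
    exact sum_nonneg fun v _ => mul_nonneg (hC v) (hX.1 v)

/-- Step 4 of the proof of Theorem 3.2: under the assumptions of the
second equivalent form, the explicit extension `X̃` of any `X ∈ Π^s(r_1, …, r_m)` —
agreeing with `X` on `[n]^m`, putting mass `(r_k)_{i} − [c_k(X)]_i` at the index of
`T_{[m]∖{k}}` whose `k`-th coordinate is `i`, and zero elsewhere — belongs to
`Π(r̄_1^{(2)}, …, r̄_m^{(2)})` and has the same transport cost; consequently the optimal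
value of the extended problem is at most that of the partial problem. -/
theorem mpot_second_form_extension {m n : ℕ} (hm : 3 ≤ m) (hn : 1 ≤ n)
    (C : (Fin m → Fin n) → ℝ) (hC : ∀ v, 0 ≤ C v)
    (r : Fin m → Fin n → ℝ) (hr : ∀ k j, 0 ≤ r k j)
    (s : ℝ) (hs0 : 0 ≤ s) (hs : ∀ k, s ≤ ∑ j, r k j)
    (D : ℕ → ℝ) (hD0 : IsGreatest (Set.range C) (D 0))
    (hDm1 : D (m - 1) = 0) (hDm : 0 < D m)
    (hconc3 : m = 3 → D 2 + D 0 - 2 * D 1 ≤ 0)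
    (hconc : 4 ≤ m → ∀ i, 1 ≤ i → i ≤ m - 3 →
      D (i + 1) + D (i - 1) - 2 * D i
          ≤ ((m - 1 - i : ℕ) : ℝ) * (D (i + 2) + D i - 2 * D (i + 1)) ∧
        ((m - 1 - i : ℕ) : ℝ) * (D (i + 2) + D i - 2 * D (i + 1)) ≤ 0) :
    (∀ X ∈ PiPartial r s, ∀ Xt : (Fin m → Fin (n + 1)) → ℝ,
      (∀ v : Fin m → Fin n, Xt (emb v) = X v) →
      (∀ (k : Fin m) (i : Fin n),
        Xt (fun ℓ => if ℓ = k then i.castSucc else Fin.last n) = r k i - marg X k i) →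
      (∀ u : Fin m → Fin (n + 1), 0 < nLast u → nLast u ≠ m - 1 → Xt u = 0) →
      Xt ∈ PiEq (extMarg2 r s) ∧ dot (extCost C D) Xt = dot C X) ∧
    sInf ((fun Y => dot (extCost C D) Y) '' PiEq (extMarg2 r s))
      ≤ sInf ((fun X => dot C X) '' PiPartial r s) :=
  mpot_second_form_extension_general hm C hC r hr s hs0 hs D hDm1
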